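/- Let d ≥ 1 and let Q_d be the graph of the d-dimensional hypercube: its vertices are the 2^d points of {0,1}^d, and two vertices are adjacent if and only if they differ in exactly one coordinate. Then there exists a polynomial H(x) with nonnegative integer coefficients such that (1−x)^{2^d+1} · Ehr(P(Q_d),x) = H(x) as formal power series, and H is palindromic of degree exactly 2^d − 2. -/

import Mathlib

open Polynomial PowerSeries Pointwise

/-- The graph polytope `P(G)` of a simple graph `G`:
all points with coordinates in `[0,1]` such that `x i + x j ≤ 1` for every edge `ij`. -/
def graphPolytope {V : Type*} (G : SimpleGraph V) : Set (V → ℝ) :=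
  {x | (∀ i, 0 ≤ x i ∧ x i ≤ 1) ∧ ∀ i j, G.Adj i j → x i + x j ≤ 1}

/-- `ehr P n` is the number of lattice points in the `n`-th dilate `nP` of `P`. -/
noncomputable def ehr {V : Type*} (P : Set (V → ℝ)) (n : ℕ) : ℕ :=
  Set.ncard {m : V → ℤ | (fun i => (m i : ℝ)) ∈ (n : ℝ) • P}

/-- The Ehrhart series `Ehr(P, x) = Σ_{n ≥ 0} ehr(P,n) xⁿ` as a formal power series over `ℚ`. -/
noncomputable def ehrSeries {V : Type*} (P : Set (V → ℝ)) : PowerSeries ℚ :=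
  PowerSeries.mk fun n => (ehr P n : ℚ)

/-- The graph of the `d`-dimensional hypercube: vertices are the `2 ^ d` points of
`{0,1}^d`, and two vertices are adjacent iff they differ in exactly one coordinate. -/
def cubeGraph (d : ℕ) : SimpleGraph (Fin d → Bool) where
  Adj x y := ∃! i, x i ≠ y i
  symm := by
    constructor
    rintro x y ⟨i, hi, hu⟩
    exact ⟨i, hi.symm, fun j hj => hu j hj.symm⟩
  loopless := by
    constructor
    rintro x ⟨i, hi, -⟩
    exact hi rfl

/-!
`Q_d` is bipartite (colour a vertex by the parity of its number of ones) and has no isolated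
vertex. For a bipartite graph `G` with colour classes `L` and `U`, replacing `x v` by `n - x v` for
`v ∈ U` identifies the lattice points of `n • P(G)` with the maps `V → {0, …, n}` that are weakly
increasing along every edge oriented from `L` to `U`; so `ehr(P(G), n) = Ω(n + 1)` is an order
polynomial. Stanley's theory of `P`-partitions, applied to a natural labelling of this poset, gives
`(1 - x) ^ (|V| + 1) Ehr(P(G), x) = W(x) := ∑ x ^ des(w)` over the linear extensions `w`, and the
strict order polynomial `Ω°` has numerator `x ^ (|V| - 1) W(1 / x)`. Every element of the poset is
minimal or maximal and lies on an edge, so the strict maps into `n + 2` values are the weak maps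
into `n + 1` values shifted up on `U`; hence `x ^ (|V| - 1) W(1 / x) = x W(x)`. As `W(0) ≥ 1` (the
identity extension), `W` is palindromic of degree `|V| - 2`.
-/

open Finset Function Equiv

section MonotoneCount

variable {m : ℕ}

def weakSteps (s : Finset (Fin m)) : Fin (m + 1) → ℕ :=
  Fin.partialSum fun j => if j ∈ s then 0 else 1

lemma weakSteps_succ (s : Finset (Fin m)) (i : Fin m) :
    weakSteps s i.succ = weakSteps s i.castSucc + if i ∈ s then 0 else 1 :=
  Fin.partialSum_succ _ _

lemma weakSteps_last (s : Finset (Fin m)) : weakSteps s (Fin.last m) = m - #s := by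
  rw [weakSteps, Fin.partialSum, Fin.val_last, List.take_of_length_le (by simp), List.sum_ofFn]
  simp [Finset.sum_ite, Finset.filter_not, ← Finset.compl_eq_univ_sdiff, Finset.card_compl]

lemma monotone_weakSteps (s : Finset (Fin m)) : Monotone (weakSteps s) :=
  Fin.monotone_iff_le_succ.2 fun i => by rw [weakSteps_succ]; omega

lemma weakSteps_le_of_strictMono (s : Finset (Fin m)) {N : ℕ} {G : Fin (m + 1) → Fin N}
    (hG : StrictMono G) (i : Fin (m + 1)) : weakSteps s i ≤ G i := by
  induction i using Fin.induction with
  | zero => simp [weakSteps]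
  | succ i ih =>
    have := Fin.lt_def.1 (hG i.castSucc_lt_succ)
    rw [weakSteps_succ]
    split_ifs <;> omega

lemma sub_weakSteps_castSucc_add_le (s : Finset (Fin m)) {N : ℕ} {G : Fin (m + 1) → Fin N}
    (hG : StrictMono G) (i : Fin m) :
    (G i.castSucc : ℕ) - weakSteps s i.castSucc + (if i ∈ s then 1 else 0) ≤
      G i.succ - weakSteps s i.succ := by
  have := Fin.lt_def.1 (hG i.castSucc_lt_succ)
  have := weakSteps_le_of_strictMono s hG i.castSucc
  rw [weakSteps_succ]
  split_ifs <;> omega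

lemma monotone_sub_weakSteps (s : Finset (Fin m)) {N : ℕ} {G : Fin (m + 1) → Fin N}
    (hG : StrictMono G) : Monotone fun i => (G i : ℕ) - weakSteps s i :=
  Fin.monotone_iff_le_succ.2 fun i =>
    (Nat.le_add_right _ _).trans (sub_weakSteps_castSucc_add_le s hG i)

/-- Adding `weakSteps s` turns the monotone maps that increase strictly at the steps in `s`
into the strictly monotone ones. -/
def monotoneStrictOnEquiv (s : Finset (Fin m)) (n : ℕ) :
    {h : Fin (m + 1) → Fin n // Monotone h ∧ ∀ i ∈ s, h i.castSucc < h i.succ} ≃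
      (Fin (m + 1) ↪o Fin (n + (m - #s))) where
  toFun h := OrderEmbedding.ofStrictMono
    (fun i => ⟨h.1 i + weakSteps s i, by
      have := Fin.le_def.1 (h.2.1 (Fin.le_last i))
      have := monotone_weakSteps s (Fin.le_last i)
      have := (h.1 (Fin.last m)).isLt
      have := weakSteps_last s
      omega⟩)
    (Fin.strictMono_iff_lt_succ.2 fun i => by
      have := Fin.le_def.1 (h.2.1 i.castSucc_lt_succ.le)
      simp only [Fin.lt_def, weakSteps_succ]
      by_cases hi : i ∈ s
      · have := Fin.lt_def.1 (h.2.2 i hi)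
        simp only [hi, if_true]
        omega
      · simp only [hi, if_false]
        omega)
  invFun G := ⟨fun i => ⟨G i - weakSteps s i, by
      refine lt_of_le_of_lt (monotone_sub_weakSteps s G.strictMono (Fin.le_last i)) ?_
      have hlt := (G (Fin.last m)).isLt
      have hle := weakSteps_le_of_strictMono s G.strictMono (Fin.last m)
      show _ - weakSteps s (Fin.last m) < n
      rw [weakSteps_last] at hle ⊢
      omega⟩,
    fun i j hij => Fin.le_def.2 (monotone_sub_weakSteps s G.strictMono hij),
    fun i hi => Fin.lt_def.2 <| by
      simpa [hi] using sub_weakSteps_castSucc_add_le s G.strictMono i⟩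
  left_inv h := by ext; simp
  right_inv G := by ext; simp [weakSteps_le_of_strictMono s G.strictMono]

theorem card_monotone_strictOn (s : Finset (Fin m)) (n : ℕ) :
    Nat.card {h : Fin (m + 1) → Fin n // Monotone h ∧ ∀ i ∈ s, h i.castSucc < h i.succ} =
      (n + (m - #s)).choose (m + 1) := by
  rw [Nat.card_congr ((monotoneStrictOnEquiv s n).trans Set.powersetCard.ofFinEmbEquiv),
    Set.powersetCard.card, Nat.card_eq_fintype_card, Fintype.card_fin]

end MonotoneCount

section Descents

variable {m : ℕ} {γ : Type*} [LinearOrder γ]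

def descentSet (g : Fin (m + 1) → γ) : Finset (Fin m) :=
  {i | g i.succ < g i.castSucc}

lemma descentSet_toDual_comp {g : Fin (m + 1) → γ} (hg : Injective g) :
    descentSet (OrderDual.toDual ∘ g) = (descentSet g)ᶜ := by
  ext i
  have : g i.castSucc ≠ g i.succ := hg.ne i.castSucc_lt_succ.ne
  simp only [descentSet, mem_filter, mem_univ, true_and, mem_compl, comp_apply,
    OrderDual.toDual_lt_toDual, not_lt]
  exact ⟨le_of_lt, fun h => h.lt_of_ne this⟩

lemma card_descentSet_le (g : Fin (m + 1) → γ) : #(descentSet g) ≤ m :=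
  (card_le_univ _).trans_eq (Fintype.card_fin m)

lemma strictMono_toLex_iff {β : Type*} [LinearOrder β] {f : Fin (m + 1) → β}
    {g : Fin (m + 1) → γ} (hg : Injective g) :
    StrictMono (fun i => toLex (f i, g i)) ↔
      Monotone f ∧ ∀ i ∈ descentSet g, f i.castSucc < f i.succ := by
  simp only [Fin.strictMono_iff_lt_succ, Fin.monotone_iff_le_succ, Prod.Lex.toLex_lt_toLex,
    descentSet, mem_filter, mem_univ, true_and]
  have hne (i : Fin m) : g i.castSucc ≠ g i.succ := hg.ne i.castSucc_lt_succ.ne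
  constructor
  · intro h
    refine ⟨fun i => (h i).elim le_of_lt fun h' => h'.1.le, fun i hi => ?_⟩
    exact (h i).resolve_right fun h' => lt_asymm hi h'.2
  · rintro ⟨hmono, hstrict⟩ i
    rcases (hmono i).lt_or_eq with hlt | heq
    · exact Or.inl hlt
    · exact Or.inr ⟨heq, lt_of_le_of_ne (not_lt.1 fun hi => (hstrict i hi).ne heq) (hne i)⟩

lemma Tuple.eq_sort_iff_strictMono {N : ℕ} {β : Type*} [LinearOrder β] {k : Fin N → β}
    (hk : Injective k) {σ : Perm (Fin N)} : σ = Tuple.sort k ↔ StrictMono (k ∘ σ) := by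
  rw [Tuple.eq_sort_iff]
  refine ⟨fun h => h.1.strictMono_of_injective (hk.comp σ.injective), fun h => ⟨h.monotone, ?_⟩⟩
  exact fun i j hij he => absurd (σ.injective (hk he)) hij.ne

open Classical in
/-- A permutation `w` lists the elements in the order `w 0, w 1, …`; it is a linear extension
of `R` when `R a b` forces `a` to be listed before `b`. -/
noncomputable def linearExtensions (R : Fin m → Fin m → Prop) : Finset (Perm (Fin m)) :=
  {w | ∀ a b, R a b → w.symm a < w.symm b}

lemma card_strictMono_toLex_comp {t : Fin (m + 1) → γ} (ht : Injective t)
    (w : Perm (Fin (m + 1))) (n : ℕ) :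
    Nat.card {f : Fin (m + 1) → Fin n // StrictMono fun i => toLex (f (w i), t (w i))} =
      (n + (m - #(descentSet (t ∘ w)))).choose (m + 1) := by
  rw [← card_monotone_strictOn]
  exact Nat.card_congr ((Equiv.arrowCongr w.symm (Equiv.refl _)).subtypeEquiv
    fun f => strictMono_toLex_iff (ht.comp w.injective))

/-- Sorting by the injective key `a ↦ (f a, t a)` sends every `f` to a linear extension; the
fibre over `w` consists of the `f` along which the key increases. -/
theorem card_toLex_lt_eq_sum (R : Fin (m + 1) → Fin (m + 1) → Prop) {t : Fin (m + 1) → γ}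
    (ht : Injective t) (n : ℕ) :
    Nat.card {f : Fin (m + 1) → Fin n // ∀ a b, R a b → toLex (f a, t a) < toLex (f b, t b)} =
      ∑ w ∈ linearExtensions R, (n + (m - #(descentSet (t ∘ w)))).choose (m + 1) := by
  classical
  let key (f : Fin (m + 1) → Fin n) (a : Fin (m + 1)) : Fin n ×ₗ γ := toLex (f a, t a)
  have hkey (f) : Injective (key f) := fun a b h => ht (congrArg (fun p => (ofLex p).2) h)
  have hsorted (f) (w : Perm (Fin (m + 1))) (hw : StrictMono (key f ∘ w)) :
      (∀ a b, R a b → key f a < key f b) ↔ w ∈ linearExtensions R := by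
    simp only [linearExtensions, mem_filter, mem_univ, true_and]
    refine forall₂_congr fun a b => imp_congr_right fun _ => ?_
    simpa using hw.lt_iff_lt (a := w.symm a) (b := w.symm b)
  rw [Nat.card_eq_fintype_card, Fintype.card_subtype,
    card_eq_sum_card_fiberwise (f := fun f => Tuple.sort (key f)) (t := linearExtensions R)]
  · refine sum_congr rfl fun w hw => ?_
    rw [← card_strictMono_toLex_comp ht, Nat.card_eq_fintype_card, Fintype.card_subtype,
      filter_filter]
    congr 1
    ext f
    simp only [mem_filter, mem_univ, true_and]
    rw [eq_comm, Tuple.eq_sort_iff_strictMono (hkey f)]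
    exact ⟨And.right, fun h => ⟨(hsorted f w h).2 hw, h⟩⟩
  · intro f hf
    simp only [coe_filter, mem_univ, true_and] at hf
    exact (hsorted f _ ((Tuple.eq_sort_iff_strictMono (hkey f)).1 rfl)).1 hf

end Descents

section OrderPolynomial

variable {α β : Type*}

noncomputable def orderPolynomial (R : α → α → Prop) (n : ℕ) : ℕ :=
  Nat.card {f : α → Fin n // ∀ a b, R a b → f a ≤ f b}

noncomputable def strictOrderPolynomial (R : α → α → Prop) (n : ℕ) : ℕ :=
  Nat.card {f : α → Fin n // ∀ a b, R a b → f a < f b}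

lemma card_relPreserving_comp_equiv {γ : Type*} (e : β ≃ α) (R : α → α → Prop)
    (r : γ → γ → Prop) :
    Nat.card {f : β → γ // ∀ a b, R (e a) (e b) → r (f a) (f b)} =
      Nat.card {f : α → γ // ∀ a b, R a b → r (f a) (f b)} :=
  Nat.card_congr ((e.arrowCongr (Equiv.refl γ)).subtypeEquiv fun f => by
    simp [e.forall_congr_left])

lemma orderPolynomial_zero [Nonempty α] (R : α → α → Prop) : orderPolynomial R 0 = 0 := by
  simp [orderPolynomial]

variable {m : ℕ} {R : Fin (m + 1) → Fin (m + 1) → Prop}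

theorem orderPolynomial_eq_sum (hR : ∀ a b, R a b → a < b) (n : ℕ) :
    orderPolynomial R n =
      ∑ w ∈ linearExtensions R, (n + (m - #(descentSet w))).choose (m + 1) := by
  convert card_toLex_lt_eq_sum R injective_id n using 1
  · refine Nat.card_congr (Equiv.subtypeEquivRight fun f => forall₂_congr fun a b =>
      forall_congr' fun hab => ?_)
    simp [Prod.Lex.toLex_lt_toLex, le_iff_lt_or_eq, hR a b hab]
  · rfl

theorem strictOrderPolynomial_eq_sum (hR : ∀ a b, R a b → a < b) (n : ℕ) :
    strictOrderPolynomial R n =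
      ∑ w ∈ linearExtensions R, (n + #(descentSet w)).choose (m + 1) := by
  convert card_toLex_lt_eq_sum R OrderDual.toDual.injective n using 1
  · refine Nat.card_congr (Equiv.subtypeEquivRight fun f => forall₂_congr fun a b =>
      forall_congr' fun hab => ?_)
    simp [Prod.Lex.toLex_lt_toLex, (hR a b hab).not_gt]
  · refine sum_congr rfl fun w _ => ?_
    rw [descentSet_toDual_comp w.injective, card_compl, Fintype.card_fin,
      Nat.sub_sub_self (card_descentSet_le _)]

end OrderPolynomial

section GeneratingFunction

lemma mk_choose_eq_X_pow_mul_invOneSubPow (S : Type*) [CommRing S] {m D : ℕ} (hD : D ≤ m) :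
    (PowerSeries.mk fun n => ((n + 1 + (m - D)).choose (m + 1) : S)) =
      PowerSeries.X ^ D * (invOneSubPow S (m + 2)).val := by
  ext n
  rw [PowerSeries.coeff_mk, PowerSeries.coeff_X_pow_mul', invOneSubPow_val_succ_eq_mk_add_choose]
  split_ifs with h
  · rw [PowerSeries.coeff_mk, show n + 1 + (m - D) = m + 1 + (n - D) by omega]
  · rw [Nat.choose_eq_zero_of_lt (by omega), Nat.cast_zero]

theorem one_sub_X_pow_mul_mk_sum_choose (S : Type*) [CommRing S] {ι : Type*} (s : Finset ι)
    {m : ℕ} (g : ι → ℕ) (hg : ∀ i ∈ s, g i ≤ m) :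
    (1 - PowerSeries.X : S⟦X⟧) ^ (m + 2) *
        PowerSeries.mk (fun n => ((∑ i ∈ s, (n + 1 + (m - g i)).choose (m + 1) : ℕ) : S)) =
      ∑ i ∈ s, PowerSeries.X ^ g i := by
  have hsum : (PowerSeries.mk fun n => ((∑ i ∈ s, (n + 1 + (m - g i)).choose (m + 1) : ℕ) : S)) =
      ∑ i ∈ s, PowerSeries.X ^ g i * (invOneSubPow S (m + 2)).val := by
    rw [← sum_congr rfl fun i hi => mk_choose_eq_X_pow_mul_invOneSubPow S (hg i hi)]
    ext n
    simp [map_sum]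
  rw [hsum, mul_sum]
  refine sum_congr rfl fun i _ => ?_
  rw [mul_left_comm, ← invOneSubPow_inv_eq_one_sub_pow, Units.inv_val, mul_one]

end GeneratingFunction

section Palindromic

variable {R : Type*} [Semiring R]

lemma Polynomial.reflect_sum_X_pow {ι : Type*} (s : Finset ι) (g : ι → ℕ) {N : ℕ}
    (hg : ∀ i ∈ s, g i ≤ N) :
    reflect N (∑ i ∈ s, (Polynomial.X : R[X]) ^ g i) = ∑ i ∈ s, Polynomial.X ^ (N - g i) := by
  induction s using Finset.cons_induction with
  | empty => simp
  | cons a s _ ih =>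
    rw [sum_cons, sum_cons, reflect_add, reflect_monomial, revAt_le (hg a (mem_cons_self a s)),
      ih fun i hi => hg i (mem_cons_of_mem hi)]

variable {H : R[X]} {N : ℕ}

lemma Polynomial.coeff_eq_zero_of_reflect_eq_X_mul (h : H.reflect N = Polynomial.X * H) :
    H.coeff N = 0 := by
  simpa [coeff_reflect] using congrArg (coeff · 0) h

lemma Polynomial.coeff_sub_one_sub_of_reflect_eq_X_mul (h : H.reflect N = Polynomial.X * H)
    {i : ℕ} (hi : i < N) : H.coeff (N - 1 - i) = H.coeff i := by
  simpa [coeff_reflect, revAt_le hi, show N - (i + 1) = N - 1 - i by omega] using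
    congrArg (coeff · (i + 1)) h

theorem Polynomial.natDegree_eq_of_reflect_eq_X_mul (hdeg : H.natDegree ≤ N)
    (h : H.reflect N = Polynomial.X * H) (h0 : H.coeff 0 ≠ 0) : H.natDegree = N - 1 := by
  have hN : N ≠ 0 := by
    rintro rfl
    exact h0 (coeff_eq_zero_of_reflect_eq_X_mul h)
  refine le_antisymm (natDegree_le_iff_coeff_eq_zero.2 fun k hk => ?_)
    (le_natDegree_of_ne_zero ?_)
  · rcases (show N ≤ k by omega).eq_or_lt with rfl | hlt
    · exact coeff_eq_zero_of_reflect_eq_X_mul h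
    · exact coeff_eq_zero_of_natDegree_lt (hdeg.trans_lt hlt)
  · have := coeff_sub_one_sub_of_reflect_eq_X_mul h (Nat.pos_of_ne_zero hN)
    rw [Nat.sub_zero] at this
    rwa [this]

theorem Polynomial.coeff_eq_coeff_sub_of_reflect_eq_X_mul (h : H.reflect N = Polynomial.X * H)
    {i : ℕ} (hi : i ≤ N - 1) : H.coeff i = H.coeff (N - 1 - i) := by
  rcases Nat.eq_zero_or_pos N with rfl | hN
  · obtain rfl : i = 0 := by omega
    rfl
  · exact (coeff_sub_one_sub_of_reflect_eq_X_mul h (by omega)).symm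

end Palindromic

section DescentPolynomial

variable {m : ℕ} {R : Fin (m + 1) → Fin (m + 1) → Prop}

noncomputable def descentPolynomial (R : Fin (m + 1) → Fin (m + 1) → Prop) : ℕ[X] :=
  ∑ w ∈ linearExtensions R, Polynomial.X ^ #(descentSet w)

lemma natDegree_descentPolynomial_le : (descentPolynomial R).natDegree ≤ m :=
  Polynomial.natDegree_sum_le_of_forall_le _ _ fun w _ =>
    (Polynomial.natDegree_X_pow_le _).trans (card_descentSet_le w)

lemma coeff_zero_descentPolynomial_ne_zero (hR : ∀ a b, R a b → a < b) :
    (descentPolynomial R).coeff 0 ≠ 0 := by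
  have hrefl : Equiv.refl _ ∈ linearExtensions R := by
    simpa [linearExtensions] using hR
  have hdes : descentSet (id : Fin (m + 1) → Fin (m + 1)) = ∅ :=
    filter_eq_empty_iff.2 fun i _ => lt_asymm i.castSucc_lt_succ
  rw [descentPolynomial, Polynomial.finsetSum_coeff]
  refine Nat.pos_iff_ne_zero.1 <|
    lt_of_lt_of_le ?_ (single_le_sum (fun _ _ => Nat.zero_le _) hrefl)
  simp [hdes]

lemma coe_map_sum_X_pow {ι : Type*} (s : Finset ι) (g : ι → ℕ) :
    (((∑ i ∈ s, (Polynomial.X : ℕ[X]) ^ g i).map (Nat.castRingHom ℚ) : ℚ[X]) : ℚ⟦X⟧) =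
      ∑ i ∈ s, PowerSeries.X ^ g i := by
  rw [← Polynomial.coeToPowerSeries.ringHom_apply]
  simp [Polynomial.map_sum]

theorem one_sub_X_pow_mul_mk_orderPolynomial (hR : ∀ a b, R a b → a < b) :
    (1 - PowerSeries.X : ℚ⟦X⟧) ^ (m + 2) *
        PowerSeries.mk (fun n => (orderPolynomial R (n + 1) : ℚ)) =
      (((descentPolynomial R).map (Nat.castRingHom ℚ) : ℚ[X]) : ℚ⟦X⟧) := by
  simp_rw [descentPolynomial, coe_map_sum_X_pow, orderPolynomial_eq_sum hR]
  exact one_sub_X_pow_mul_mk_sum_choose ℚ _ _ fun w _ => card_descentSet_le w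

theorem one_sub_X_pow_mul_mk_strictOrderPolynomial (hR : ∀ a b, R a b → a < b) :
    (1 - PowerSeries.X : ℚ⟦X⟧) ^ (m + 2) *
        PowerSeries.mk (fun n => (strictOrderPolynomial R (n + 1) : ℚ)) =
      ((((descentPolynomial R).reflect m).map (Nat.castRingHom ℚ) : ℚ[X]) : ℚ⟦X⟧) := by
  rw [descentPolynomial,
    Polynomial.reflect_sum_X_pow _ (fun w : Perm (Fin (m + 1)) => #(descentSet w))
      fun w _ => card_descentSet_le w,
    coe_map_sum_X_pow, ← one_sub_X_pow_mul_mk_sum_choose ℚ _ _ fun w _ => Nat.sub_le m _]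
  simp_rw [strictOrderPolynomial_eq_sum hR, Nat.sub_sub_self (card_descentSet_le _)]

/-- When strict maps into `n + 1` values correspond to weak maps into `n` values, the two
generating functions differ by a factor `X`, and comparing numerators gives the symmetry. -/
theorem reflect_descentPolynomial (hR : ∀ a b, R a b → a < b)
    (hshift : ∀ n, strictOrderPolynomial R (n + 1) = orderPolynomial R n) :
    (descentPolynomial R).reflect m = Polynomial.X * descentPolynomial R := by
  have hinj : Injective fun p : ℕ[X] => ((p.map (Nat.castRingHom ℚ) : ℚ[X]) : ℚ⟦X⟧) :=
    (Polynomial.coe_injective ℚ).comp (Polynomial.map_injective _ Nat.cast_injective)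
  have hseries : PowerSeries.mk (fun n => (strictOrderPolynomial R (n + 1) : ℚ)) =
      PowerSeries.X * PowerSeries.mk (fun n => (orderPolynomial R (n + 1) : ℚ)) := by
    ext (_ | n)
    · simp [hshift, orderPolynomial_zero]
    · simp [hshift, PowerSeries.coeff_succ_X_mul]
  apply hinj
  simp only [Polynomial.map_mul, Polynomial.map_X, Polynomial.coe_mul, Polynomial.coe_X]
  rw [← one_sub_X_pow_mul_mk_strictOrderPolynomial hR, ← one_sub_X_pow_mul_mk_orderPolynomial hR,
    hseries, mul_left_comm]

end DescentPolynomial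

section GraphPolytope

variable {V : Type*} {G : SimpleGraph V}

lemma mem_smul_graphPolytope_iff {c : ℝ} (hc : 0 ≤ c) {x : V → ℝ} :
    x ∈ c • graphPolytope G ↔ (∀ i, 0 ≤ x i ∧ x i ≤ c) ∧ ∀ i j, G.Adj i j → x i + x j ≤ c := by
  rcases hc.eq_or_lt with rfl | hc
  · have h0 : (0 : V → ℝ) ∈ graphPolytope G := ⟨fun _ => by simp, fun _ _ _ => by simp⟩
    rw [Set.zero_smul_set ⟨0, h0⟩, Set.mem_zero]
    refine ⟨?_, fun h => funext fun i => le_antisymm (h.1 i).2 (h.1 i).1⟩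
    rintro rfl
    simp
  · rw [Set.mem_smul_set_iff_inv_smul_mem₀ hc.ne']
    simp only [graphPolytope, Set.mem_ofPred_eq, Pi.smul_apply, smul_eq_mul, ← mul_add,
      inv_mul_le_one₀ hc, mul_nonneg_iff_of_pos_left (inv_pos.2 hc)]

lemma ehr_graphPolytope (n : ℕ) :
    ehr (graphPolytope G) n =
      Nat.card {q : V → Fin (n + 1) // ∀ a b, G.Adj a b → (q a : ℕ) + q b ≤ n} := by
  have hmem (q : V → ℤ) : (fun i => (q i : ℝ)) ∈ (n : ℝ) • graphPolytope G ↔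
      (∀ v, 0 ≤ q v ∧ q v ≤ n) ∧ ∀ a b, G.Adj a b → q a + q b ≤ n := by
    rw [mem_smul_graphPolytope_iff (Nat.cast_nonneg n)]
    norm_cast
  rw [ehr, ← Nat.card_coe_set_eq]
  refine Nat.card_congr ((Equiv.subtypeEquivRight hmem).trans
    { toFun := fun q => ⟨fun v => ⟨(q.1 v).toNat, by have := q.2.1 v; omega⟩, fun a b hab => by
        have := q.2.2 a b hab; have := q.2.1 a; have := q.2.1 b; simp only; omega⟩
      invFun := fun q => ⟨fun v => (q.1 v : ℤ),
        fun v => by have := (q.1 v).isLt; simp only; omega,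
        fun a b hab => by have := q.2 a b hab; simp only; omega⟩
      left_inv := fun q => Subtype.ext <| funext fun v => Int.toNat_of_nonneg (q.2.1 v).1
      right_inv := fun q => Subtype.ext <| funext fun v => by simp })

def bipartiteRel (c : G.Coloring Bool) (a b : V) : Prop :=
  G.Adj a b ∧ c a = false

lemma SimpleGraph.Coloring.eq_not_of_adj (c : G.Coloring Bool) {a b : V} (h : G.Adj a b) :
    c b = !c a := by
  have := c.valid h
  revert this
  cases c a <;> cases c b <;> simp

lemma bipartiteRel.right_eq_true {c : G.Coloring Bool} {a b : V} (h : bipartiteRel c a b) :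
    c b = true := by
  simpa [h.2] using c.eq_not_of_adj h.1

/-- Reversing the values on the `true` side turns the edge constraints `q a + q b ≤ n` into
order preservation along `bipartiteRel c`. -/
lemma card_sum_le_eq_orderPolynomial (c : G.Coloring Bool) (n : ℕ) :
    Nat.card {q : V → Fin (n + 1) // ∀ a b, G.Adj a b → (q a : ℕ) + q b ≤ n} =
      orderPolynomial (bipartiteRel c) (n + 1) := by
  let flip : Perm (V → Fin (n + 1)) :=
    Equiv.piCongrRight fun v => if c v then Fin.revPerm else Equiv.refl _
  have key (q : V → Fin (n + 1)) {a b : V} (hab : bipartiteRel c a b) :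
      (q a : ℕ) + q b ≤ n ↔ flip q a ≤ flip q b := by
    simp only [flip, piCongrRight_apply, Pi.map_apply, hab.2, hab.right_eq_true,
      Bool.false_eq_true, if_false, if_true, refl_apply, Fin.revPerm_apply, Fin.le_def, Fin.val_rev]
    omega
  refine Nat.card_congr (flip.subtypeEquiv fun q => ⟨fun h a b hab => (key q hab).1 (h a b hab.1),
    fun h a b hab => ?_⟩)
  cases ha : c a
  · exact (key q ⟨hab, ha⟩).2 (h a b ⟨hab, ha⟩)
  · have hb : c b = false := by simpa [ha] using c.eq_not_of_adj hab
    rw [add_comm]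
    exact (key q ⟨hab.symm, hb⟩).2 (h b a ⟨hab.symm, hb⟩)

/-- Every vertex lies on an edge, so a strict map into `n + 1` values avoids the top value on
the `false` side and the bottom value on the `true` side. -/
lemma strictOrderPolynomial_bipartiteRel_succ (c : G.Coloring Bool) (hG : ∀ v, ∃ u, G.Adj v u)
    (n : ℕ) :
    strictOrderPolynomial (bipartiteRel c) (n + 1) = orderPolynomial (bipartiteRel c) n := by
  let shift (v : V) (j : Fin n) : Fin (n + 1) := if c v then j.succ else j.castSucc
  have hshift {a b : V} (hab : bipartiteRel c a b) (i j : Fin n) :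
      shift a i < shift b j ↔ i ≤ j := by
    simp [shift, hab.2, hab.right_eq_true, Fin.castSucc_lt_succ_iff]
  have hpre (f : {f : V → Fin (n + 1) // ∀ a b, bipartiteRel c a b → f a < f b}) (v : V) :
      ∃ j, shift v j = f.1 v := by
    obtain ⟨u, hu⟩ := hG v
    cases hv : c v
    · obtain ⟨j, hj⟩ :=
        Fin.exists_castSucc_eq.2 ((f.2 v u ⟨hu, hv⟩).trans_le (Fin.le_last _)).ne
      exact ⟨j, by simp [shift, hv, hj]⟩
    · have hu' : c u = false := by simpa [hv] using c.eq_not_of_adj hu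
      obtain ⟨j, hj⟩ := Fin.exists_succ_eq.2 (f.2 u v ⟨hu.symm, hu'⟩).ne_bot
      exact ⟨j, by simp [shift, hv, hj]⟩
  rw [orderPolynomial, strictOrderPolynomial, eq_comm]
  refine Nat.card_eq_of_bijective
    (fun g => ⟨fun v => shift v (g.1 v), fun a b hab => (hshift hab _ _).2 (g.2 a b hab)⟩)
    ⟨fun g g' h => Subtype.ext (funext fun v => ?_), fun f => ?_⟩
  · have := congrFun (congrArg Subtype.val h) v
    cases hv : c v <;> simpa [shift, hv] using this
  · choose g hg using hpre f
    refine ⟨⟨g, fun a b hab => (hshift hab _ _).1 ?_⟩, Subtype.ext (funext hg)⟩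
    rw [hg, hg]
    exact f.2 a b hab

end GraphPolytope

lemma exists_equiv_fin_monotone {α β : Type*} [Fintype α] [LinearOrder β] (c : α → β) {N : ℕ}
    (hN : Fintype.card α = N) : ∃ e : Fin N ≃ α, Monotone (c ∘ e) := by
  let q := (Fintype.equivFinOfCardEq hN).symm
  exact ⟨(Tuple.sort (c ∘ q)).trans q, Tuple.monotone_sort (c ∘ q)⟩

theorem exists_hStar_graphPolytope_of_isBipartite {V : Type*} [Fintype V] [Nonempty V]
    {G : SimpleGraph V} (hG : G.IsBipartite) (hadj : ∀ v, ∃ u, G.Adj v u) :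
    ∃ H : ℕ[X],
      (1 - PowerSeries.X : ℚ⟦X⟧) ^ (Fintype.card V + 1) * ehrSeries (graphPolytope G) =
          ((H.map (Nat.castRingHom ℚ) : ℚ[X]) : ℚ⟦X⟧) ∧
        H.natDegree = Fintype.card V - 2 ∧
        ∀ i ≤ Fintype.card V - 2, H.coeff i = H.coeff (Fintype.card V - 2 - i) := by
  obtain ⟨m, hm⟩ := Nat.exists_eq_add_one.2 (Fintype.card_pos (α := V))
  let c : G.Coloring Bool := hG.toColoring (by simp)
  obtain ⟨e, he⟩ := exists_equiv_fin_monotone c hm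
  let R (a b : Fin (m + 1)) : Prop := bipartiteRel c (e a) (e b)
  have hR (a b) (hab : R a b) : a < b :=
    he.reflect_lt (by simp [hab.2, bipartiteRel.right_eq_true hab])
  have hΩ (n) : orderPolynomial R n = orderPolynomial (bipartiteRel c) n :=
    card_relPreserving_comp_equiv e (bipartiteRel c) (· ≤ ·)
  have hΩs (n) : strictOrderPolynomial R n = strictOrderPolynomial (bipartiteRel c) n :=
    card_relPreserving_comp_equiv e (bipartiteRel c) (· < ·)
  have hseries : ehrSeries (graphPolytope G) =
      PowerSeries.mk fun n => (orderPolynomial R (n + 1) : ℚ) := by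
    ext n
    simp [ehrSeries, ehr_graphPolytope, card_sum_le_eq_orderPolynomial c, hΩ]
  have hrefl := reflect_descentPolynomial hR fun n => by
    rw [hΩ, hΩs, strictOrderPolynomial_bipartiteRel_succ c hadj]
  refine ⟨descentPolynomial R, ?_, ?_, fun i hi => ?_⟩
  · rw [hseries, hm, ← one_sub_X_pow_mul_mk_orderPolynomial hR]
  · rw [hm, Polynomial.natDegree_eq_of_reflect_eq_X_mul natDegree_descentPolynomial_le hrefl
      (coeff_zero_descentPolynomial_ne_zero hR)]
    rfl
  · rw [hm] at hi ⊢
    exact Polynomial.coeff_eq_coeff_sub_of_reflect_eq_X_mul hrefl hi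

lemma cubeGraph_isBipartite (d : ℕ) : (cubeGraph d).IsBipartite := by
  let parity (v : Fin d → Bool) : ZMod 2 := ∑ i, ((v i).toNat : ZMod 2)
  have hvalid {x y : Fin d → Bool} (h : (cubeGraph d).Adj x y) : parity x ≠ parity y := by
    obtain ⟨i, hi, hu⟩ := h
    have hrest (j) (hj : j ∈ univ.erase i) : ((x j).toNat : ZMod 2) = (y j).toNat := by
      rw [not_not.1 fun hne => (mem_erase.1 hj).1 (hu j hne)]
    intro heq
    simp only [parity] at heq
    rw [← add_sum_erase _ _ (mem_univ i), ← add_sum_erase _ _ (mem_univ i), sum_congr rfl hrest,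
      add_left_inj] at heq
    revert heq hi
    cases x i <;> cases y i <;> decide
  simpa using (SimpleGraph.Coloring.mk parity hvalid).colorable

lemma cubeGraph_exists_adj {d : ℕ} (hd : 1 ≤ d) (v : Fin d → Bool) :
    ∃ u, (cubeGraph d).Adj v u := by
  let i : Fin d := ⟨0, hd⟩
  refine ⟨Function.update v i (!v i), i, by simp, fun j hj => ?_⟩
  by_contra hji
  exact hj (by simp [hji])

theorem stmt10 (d : ℕ) (hd : 1 ≤ d) :
    ∃ H : Polynomial ℕ,
      ((1 - PowerSeries.X) ^ (2 ^ d + 1) : PowerSeries ℚ) *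
          ehrSeries (graphPolytope (cubeGraph d)) =
          ((H.map (Nat.castRingHom ℚ) : Polynomial ℚ) : PowerSeries ℚ) ∧
        H.natDegree = 2 ^ d - 2 ∧
        ∀ i ≤ 2 ^ d - 2, H.coeff i = H.coeff (2 ^ d - 2 - i) := by
  simpa using exists_hStar_graphPolytope_of_isBipartite (cubeGraph_isBipartite d)
    (cubeGraph_exists_adj hd)
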